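/- arXiv:2602.19646 — 3 statements merged into one kernel-verified Lean document; each statement's English description precedes it below -/
import Mathlib

section
/- Let F be a non-archimedean local field with ring of integers O and residue field of odd characteristic. Let α₁, α₂, α₃, α₄ be units of O satisfying α₁ + α₂ ≡ α₃ + α₄ and α₁⁻¹ + α₂⁻¹ ≡ α₃⁻¹ + α₄⁻¹ modulo 𝔭^v (i.e. v ≤ v(α₁+α₂−α₃−α₄) and v ≤ v(α₁⁻¹+α₂⁻¹−α₃⁻¹−α₄⁻¹)). Then for every odd integer l, v(α₁^l + α₂^l − α₃^l − α₄^l) ≥ v. If moreover α₁ + α₂ is a unit, this holds for every integer l. -/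
/-!
The congruences only matter modulo the ideal, so everything reduces to an identity in an arbitrary
commutative ring. With `s = x + y` and `p = x y`, the power sums `T n = xⁿ + yⁿ` satisfy
`T (n + 2) = s T (n + 1) - p T n`. The hypotheses give `s = s'` and, since `x⁻¹ + y⁻¹ = s / p`,
`s p = s p'`. Running the recurrence, odd power sums agree because `zⁿ + wⁿ` is divisible by
`z + w` for odd `n`, so the error term `(p - p') (zⁿ + wⁿ)` is killed by `s (p - p') = 0`.
Negative exponents follow by applying the same argument to the inverses, the hypotheses being
symmetric under inversion. If `s` is a unit then `p = p'`, and all power sums agree.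
-/

section

variable {R : Type*} [CommRing R]

theorem pow_add_pow_sub_pow_sub_pow_succ_succ {x y z w : R} (hs : x + y = z + w) (n : ℕ) :
    x ^ (n + 2) + y ^ (n + 2) - z ^ (n + 2) - w ^ (n + 2) =
      (x + y) * (x ^ (n + 1) + y ^ (n + 1) - z ^ (n + 1) - w ^ (n + 1))
        - x * y * (x ^ n + y ^ n - z ^ n - w ^ n) - (x * y - z * w) * (z ^ n + w ^ n) := by
  linear_combination (z ^ (n + 1) + w ^ (n + 1)) * hs

theorem pow_add_pow_eq_of_add_eq_of_mul_eq {x y z w : R} (hs : x + y = z + w) (hp : x * y = z * w)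
    (n : ℕ) : x ^ n + y ^ n = z ^ n + w ^ n := by
  rw [← sub_eq_zero, ← sub_sub]
  induction n using Nat.twoStepInduction with
  | zero => ring
  | one => simpa [sub_sub, sub_eq_zero] using hs
  | more n ih₀ ih₁ =>
    rw [pow_add_pow_sub_pow_sub_pow_succ_succ hs, ih₀, ih₁, hp]
    ring

theorem pow_add_pow_eq_of_odd {x y z w : R} (hs : x + y = z + w)
    (hp : (x + y) * (x * y - z * w) = 0) {n : ℕ} (hn : Odd n) :
    x ^ n + y ^ n = z ^ n + w ^ n := by
  -- Even power sums need not agree; only their difference times `x + y` vanishes.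
  have key : ∀ k : ℕ, (x + y) * (x ^ (2 * k) + y ^ (2 * k) - z ^ (2 * k) - w ^ (2 * k)) = 0 ∧
      x ^ (2 * k + 1) + y ^ (2 * k + 1) - z ^ (2 * k + 1) - w ^ (2 * k + 1) = 0 := by
    intro k
    induction k with
    | zero => exact ⟨by ring, by linear_combination hs⟩
    | succ k ih =>
      obtain ⟨hev, hodd⟩ := ih
      obtain ⟨e, he⟩ := (odd_two_mul_add_one k).add_dvd_pow_add_pow z w
      have hev_rec := pow_add_pow_sub_pow_sub_pow_succ_succ hs (2 * k)
      have hodd_rec := pow_add_pow_sub_pow_sub_pow_succ_succ hs (2 * k + 1)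
      rw [show 2 * k + 2 = 2 * (k + 1) by ring] at hev_rec
      rw [show 2 * k + 1 + 2 = 2 * (k + 1) + 1 by ring, show 2 * k + 1 + 1 = 2 * (k + 1) by ring,
        hodd, he, ← hs] at hodd_rec
      have hev_succ : (x + y) * (x ^ (2 * (k + 1)) + y ^ (2 * (k + 1)) - z ^ (2 * (k + 1))
          - w ^ (2 * (k + 1))) = 0 := by
        rw [hev_rec, hodd]
        linear_combination (-(x * y)) * hev - (z ^ (2 * k) + w ^ (2 * k)) * hp
      refine ⟨hev_succ, ?_⟩
      rw [hodd_rec]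
      linear_combination hev_succ - e * hp
  obtain ⟨k, rfl⟩ := hn
  exact sub_eq_zero.mp (by simpa only [sub_sub] using (key k).2)

theorem Units.add_mul_sub_mul_eq_zero {u₁ u₂ u₃ u₄ : Rˣ} (hs : (u₁ : R) + u₂ = u₃ + u₄)
    (hi : (↑u₁⁻¹ : R) + ↑u₂⁻¹ = ↑u₃⁻¹ + ↑u₄⁻¹) :
    ((u₁ : R) + u₂) * (u₁ * u₂ - u₃ * u₄) = 0 := by
  linear_combination (-(u₁ * u₂ * u₃ * u₄) : R) * hi
    + (u₂ * u₃ * u₄ : R) * u₁.inv_mul + (u₁ * u₃ * u₄ : R) * u₂.inv_mul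
    - (u₁ * u₂ * u₄ : R) * u₃.inv_mul - (u₁ * u₂ * u₃ : R) * u₄.inv_mul + (u₁ * u₂ : R) * hs

theorem Units.val_zpow_add_val_zpow_eq_of_odd {u₁ u₂ u₃ u₄ : Rˣ} (hs : (u₁ : R) + u₂ = u₃ + u₄)
    (hi : (↑u₁⁻¹ : R) + ↑u₂⁻¹ = ↑u₃⁻¹ + ↑u₄⁻¹) {l : ℤ} (hl : Odd l) :
    (↑(u₁ ^ l) : R) + ↑(u₂ ^ l) = ↑(u₃ ^ l) + ↑(u₄ ^ l) := by
  obtain ⟨n, rfl | rfl⟩ := Int.eq_nat_or_neg l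
  · simp only [zpow_natCast, Units.val_pow_eq_pow_val]
    exact pow_add_pow_eq_of_odd hs (Units.add_mul_sub_mul_eq_zero hs hi) (by simpa using hl)
  · simp only [zpow_neg, zpow_natCast, ← inv_pow, Units.val_pow_eq_pow_val]
    exact pow_add_pow_eq_of_odd hi
      (Units.add_mul_sub_mul_eq_zero hi (by simpa only [inv_inv] using hs)) (by simpa using hl)

theorem Units.val_zpow_add_val_zpow_eq {u₁ u₂ u₃ u₄ : Rˣ} (hs : (u₁ : R) + u₂ = u₃ + u₄)
    (hi : (↑u₁⁻¹ : R) + ↑u₂⁻¹ = ↑u₃⁻¹ + ↑u₄⁻¹) (hu : IsUnit ((u₁ : R) + u₂)) (l : ℤ) :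
    (↑(u₁ ^ l) : R) + ↑(u₂ ^ l) = ↑(u₃ ^ l) + ↑(u₄ ^ l) := by
  have hp : u₁ * u₂ = u₃ * u₄ := Units.ext <| by
    simpa [sub_eq_zero] using hu.mul_right_eq_zero.mp (Units.add_mul_sub_mul_eq_zero hs hi)
  obtain ⟨n, rfl | rfl⟩ := Int.eq_nat_or_neg l
  · simp only [zpow_natCast, Units.val_pow_eq_pow_val]
    exact pow_add_pow_eq_of_add_eq_of_mul_eq hs (by simpa using congrArg Units.val hp) n
  · simp only [zpow_neg, zpow_natCast, ← inv_pow, Units.val_pow_eq_pow_val]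
    refine pow_add_pow_eq_of_add_eq_of_mul_eq hi ?_ n
    have hp' : u₁⁻¹ * u₂⁻¹ = u₃⁻¹ * u₄⁻¹ := by rw [← _root_.mul_inv, hp, _root_.mul_inv]
    simpa using congrArg Units.val hp'

theorem Ideal.add_sub_sub_mem_iff (I : Ideal R) (a b c d : R) :
    a + b - c - d ∈ I ↔
      Ideal.Quotient.mk I a + Ideal.Quotient.mk I b =
        Ideal.Quotient.mk I c + Ideal.Quotient.mk I d := by
  rw [← Ideal.Quotient.eq_zero_iff_mem, sub_sub, map_sub, sub_eq_zero, map_add, map_add]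

theorem Units.map_val {S : Type*} [CommRing S] (f : R →+* S) (u : Rˣ) :
    f ↑u = ↑(Units.map (f : R →* S) u) := rfl

theorem Units.val_zpow_add_val_zpow_sub_sub_mem_of_odd {u₁ u₂ u₃ u₄ : Rˣ} {I : Ideal R}
    (h₁ : (u₁ : R) + u₂ - u₃ - u₄ ∈ I) (h₂ : (↑u₁⁻¹ : R) + ↑u₂⁻¹ - ↑u₃⁻¹ - ↑u₄⁻¹ ∈ I) {l : ℤ}
    (hl : Odd l) : (↑(u₁ ^ l) : R) + ↑(u₂ ^ l) - ↑(u₃ ^ l) - ↑(u₄ ^ l) ∈ I := by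
  simp only [Ideal.add_sub_sub_mem_iff, Units.map_val, map_zpow, map_inv] at h₁ h₂ ⊢
  exact Units.val_zpow_add_val_zpow_eq_of_odd h₁ h₂ hl

theorem Units.val_zpow_add_val_zpow_sub_sub_mem {u₁ u₂ u₃ u₄ : Rˣ} {I : Ideal R}
    (h₁ : (u₁ : R) + u₂ - u₃ - u₄ ∈ I) (h₂ : (↑u₁⁻¹ : R) + ↑u₂⁻¹ - ↑u₃⁻¹ - ↑u₄⁻¹ ∈ I)
    (hu : IsUnit ((u₁ : R) + u₂)) (l : ℤ) :
    (↑(u₁ ^ l) : R) + ↑(u₂ ^ l) - ↑(u₃ ^ l) - ↑(u₄ ^ l) ∈ I := by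
  have hu' := hu.map (Ideal.Quotient.mk I)
  simp only [Ideal.add_sub_sub_mem_iff, map_add, Units.map_val, map_zpow, map_inv] at h₁ h₂ hu' ⊢
  exact Units.val_zpow_add_val_zpow_eq h₁ h₂ hu' l

end

theorem stmt_0_general {O : Type*} [CommRing O] [IsLocalRing O]
    (vv : ℕ) (α₁ α₂ α₃ α₄ : Oˣ)
    (h₁ : ((α₁ : O) + α₂ - α₃ - α₄) ∈ (IsLocalRing.maximalIdeal O) ^ vv)
    (h₂ : ((↑(α₁⁻¹) : O) + ↑(α₂⁻¹) - ↑(α₃⁻¹) - ↑(α₄⁻¹)) ∈ (IsLocalRing.maximalIdeal O) ^ vv) :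
    (∀ l : ℤ, Odd l →
      ((↑(α₁ ^ l) : O) + ↑(α₂ ^ l) - ↑(α₃ ^ l) - ↑(α₄ ^ l)) ∈ (IsLocalRing.maximalIdeal O) ^ vv) ∧
    (IsUnit ((α₁ : O) + α₂) →
      ∀ l : ℤ,
      ((↑(α₁ ^ l) : O) + ↑(α₂ ^ l) - ↑(α₃ ^ l) - ↑(α₄ ^ l)) ∈ (IsLocalRing.maximalIdeal O) ^ vv) :=
  ⟨fun _ hl => Units.val_zpow_add_val_zpow_sub_sub_mem_of_odd h₁ h₂ hl,
    fun hu l => Units.val_zpow_add_val_zpow_sub_sub_mem h₁ h₂ hu l⟩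

/-- Lemma "elementary" (Lemma 12.3 in the paper): for units `α₁, α₂, α₃, α₄` of the ring of
integers `O` of a non-archimedean local field with odd residue characteristic, if
`α₁ + α₂ ≡ α₃ + α₄` and `α₁⁻¹ + α₂⁻¹ ≡ α₃⁻¹ + α₄⁻¹` modulo `𝔭^v`, then
`α₁^l + α₂^l ≡ α₃^l + α₄^l (mod 𝔭^v)` for all odd integers `l`; and if moreover `α₁ + α₂` is a
unit, then this holds for every integer `l`. -/
theorem stmt_0 {O : Type*} [CommRing O] [IsDomain O] [IsLocalRing O]
    [IsDiscreteValuationRing O]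
    (hodd : (2 : O) ∉ IsLocalRing.maximalIdeal O)
    (vv : ℕ) (α₁ α₂ α₃ α₄ : Oˣ)
    (h₁ : ((α₁ : O) + α₂ - α₃ - α₄) ∈ (IsLocalRing.maximalIdeal O) ^ vv)
    (h₂ : ((↑(α₁⁻¹) : O) + ↑(α₂⁻¹) - ↑(α₃⁻¹) - ↑(α₄⁻¹)) ∈ (IsLocalRing.maximalIdeal O) ^ vv) :
    (∀ l : ℤ, Odd l →
      ((↑(α₁ ^ l) : O) + ↑(α₂ ^ l) - ↑(α₃ ^ l) - ↑(α₄ ^ l)) ∈ (IsLocalRing.maximalIdeal O) ^ vv) ∧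
    (IsUnit ((α₁ : O) + α₂) →
      ∀ l : ℤ,
      ((↑(α₁ ^ l) : O) + ↑(α₂ ^ l) - ↑(α₃ ^ l) - ↑(α₄ ^ l)) ∈ (IsLocalRing.maximalIdeal O) ^ vv) :=
  stmt_0_general vv α₁ α₂ α₃ α₄ h₁ h₂
end

section
/- Let F be a non-archimedean local field, G = GL₂(F), N the group of upper-triangular unipotent matrices, A the diagonal torus, and K_A = A ∩ GL₂(O) the group of diagonal matrices with unit entries. A complete set of representatives for the double-coset space A \ (N\G) / K_A (i.e., orbits of the two-sided action of A × K_A on N\G) is given by the matrices [[1,0],[π^γ,1]] for 0 ≤ γ ≤ ∞ (where π^∞ := 0) and [[0,1],[1,π^γ]] for 1 ≤ γ ≤ ∞, and these represent pairwise distinct orbits. -/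
open Matrix

variable {F : Type*} [Field F]

/-- Upper-triangular unipotent 2×2 matrices (the group `N`). -/
def IsUpperUnip (n : Matrix (Fin 2) (Fin 2) F) : Prop :=
  n 0 0 = 1 ∧ n 1 1 = 1 ∧ n 1 0 = 0

/-- Invertible diagonal 2×2 matrices (the torus `A`). -/
def IsDiagTorus (a : Matrix (Fin 2) (Fin 2) F) : Prop :=
  a 0 1 = 0 ∧ a 1 0 = 0 ∧ a 0 0 ≠ 0 ∧ a 1 1 ≠ 0

/-- Diagonal matrices with entries units of `O` (the compact torus `K_A = A ∩ GL₂(O)`). -/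
def IsDiagUnits (O : Subring F) (k : Matrix (Fin 2) (Fin 2) F) : Prop :=
  k 0 1 = 0 ∧ k 1 0 = 0 ∧ k 0 0 ∈ O ∧ (k 0 0)⁻¹ ∈ O ∧ k 1 1 ∈ O ∧ (k 1 1)⁻¹ ∈ O

/-- `g` and `g'` lie in the same orbit of the two-sided action of `A × K_A` on `N\G`:
`g' = n ⬝ a ⬝ g ⬝ k` for some `n ∈ N`, `a ∈ A`, `k ∈ K_A`. -/
def OrbitRel (O : Subring F) (g g' : Matrix (Fin 2) (Fin 2) F) : Prop :=
  ∃ n a k : Matrix (Fin 2) (Fin 2) F,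
    IsUpperUnip n ∧ IsDiagTorus a ∧ IsDiagUnits O k ∧ g' = n * (a * (g * k))

/-- The claimed representatives: `[[1,0],[π^γ,1]]` for `0 ≤ γ ≤ ∞` and `[[0,1],[1,π^γ]]` for
`1 ≤ γ ≤ ∞`, with the convention `π^∞ = 0`. -/
def Reps (π : F) : Set (Matrix (Fin 2) (Fin 2) F) :=
  {M | (∃ γ : ℕ, M = !![1, 0; π ^ γ, 1]) ∨ M = !![1, 0; 0, 1] ∨
       (∃ γ : ℕ, 1 ≤ γ ∧ M = !![0, 1; 1, π ^ γ]) ∨ M = !![0, 1; 1, 0]}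

/-!
The group `N` fixes the bottom row `(c, d)` of `g`, and `(a, k) ∈ A × K_A` turns it into
`(λ c u, λ d w)` with `u, w` units of `O`, so the gap `v(c) - v(d) ∈ [-∞, ∞]` is an orbit
invariant. It is a complete one: two invertible matrices with the same bottom row differ by a left
factor `[[t, x], [0, 1]] ∈ N A`. Finally the representatives take each value of the gap exactly
once: `γ` for `[[1,0],[π^γ,1]]` and `-γ` for `[[0,1],[1,π^γ]]`.
-/

section Valuation

variable {v : F → ℤ}

lemma val_one_eq_zero (hv_mul : ∀ x y : F, x ≠ 0 → y ≠ 0 → v (x * y) = v x + v y) :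
    v 1 = 0 := by
  have h := hv_mul 1 1 one_ne_zero one_ne_zero
  rw [mul_one] at h
  omega

lemma val_inv (hv_mul : ∀ x y : F, x ≠ 0 → y ≠ 0 → v (x * y) = v x + v y) {x : F}
    (hx : x ≠ 0) : v x⁻¹ = -v x := by
  have h := hv_mul x x⁻¹ hx (inv_ne_zero hx)
  rw [mul_inv_cancel₀ hx, val_one_eq_zero hv_mul] at h
  omega

lemma val_div (hv_mul : ∀ x y : F, x ≠ 0 → y ≠ 0 → v (x * y) = v x + v y) {x y : F}
    (hx : x ≠ 0) (hy : y ≠ 0) : v (x / y) = v x - v y := by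
  rw [div_eq_mul_inv, hv_mul _ _ hx (inv_ne_zero hy), val_inv hv_mul hy, sub_eq_add_neg]

lemma val_pow (hv_mul : ∀ x y : F, x ≠ 0 → y ≠ 0 → v (x * y) = v x + v y) {x : F}
    (hx : x ≠ 0) (m : ℕ) : v (x ^ m) = m * v x := by
  induction m with
  | zero => simpa using val_one_eq_zero hv_mul
  | succ k ih =>
    rw [pow_succ, hv_mul _ _ (pow_ne_zero k hx) hx, ih]
    push_cast
    ring

lemma val_eq_zero_iff (hv_mul : ∀ x y : F, x ≠ 0 → y ≠ 0 → v (x * y) = v x + v y)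
    {O : Subring F} (hO : ∀ x : F, x ≠ 0 → (x ∈ O ↔ 0 ≤ v x)) {x : F} (hx : x ≠ 0) :
    v x = 0 ↔ x ∈ O ∧ x⁻¹ ∈ O := by
  rw [hO x hx, hO x⁻¹ (inv_ne_zero hx), val_inv hv_mul hx]
  omega

end Valuation

/-- The effect of `A × K_A` on the bottom row; `N` does not change it. -/
def BottomRowRel (O : Subring F) (g κ : Matrix (Fin 2) (Fin 2) F) : Prop :=
  ∃ c u w : F, c ≠ 0 ∧ u ≠ 0 ∧ w ≠ 0 ∧ u ∈ O ∧ u⁻¹ ∈ O ∧ w ∈ O ∧ w⁻¹ ∈ O ∧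
    κ 1 0 = c * g 1 0 * u ∧ κ 1 1 = c * g 1 1 * w

lemma OrbitRel.bottomRowRel {O : Subring F} {g κ : Matrix (Fin 2) (Fin 2) F}
    (hκ : κ.det ≠ 0) (h : OrbitRel O g κ) : BottomRowRel O g κ := by
  obtain ⟨n, a, k, ⟨-, hn11, hn10⟩, ⟨-, ha10, -, ha11⟩, ⟨hk01, hk10, hk00O, hk00O', hk11O, hk11O'⟩,
    rfl⟩ := h
  have hk : k.det ≠ 0 := by
    simp only [det_mul] at hκ
    exact right_ne_zero_of_mul (right_ne_zero_of_mul (right_ne_zero_of_mul hκ))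
  rw [det_fin_two, hk01, hk10, mul_zero, sub_zero] at hk
  refine ⟨a 1 1, k 0 0, k 1 1, ha11, left_ne_zero_of_mul hk, right_ne_zero_of_mul hk,
    hk00O, hk00O', hk11O, hk11O', ?_, ?_⟩ <;>
  simp [mul_apply, Fin.sum_univ_two, hn10, hn11, ha10, hk01, hk10, mul_assoc]

lemma exists_eq_upperUnip_mul_diag_mul {M κ : Matrix (Fin 2) (Fin 2) F} (hM : M.det ≠ 0)
    (hκ : κ.det ≠ 0) (h : κ 1 = M 1) :
    ∃ x t : F, t ≠ 0 ∧ κ = !![1, x; 0, 1] * (!![t, 0; 0, 1] * M) := by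
  set P := κ * M⁻¹ with hP
  have hκP : κ = P * M := (nonsing_inv_mul_cancel_right M κ hM.isUnit).symm
  -- `P` has the bottom row of `M * M⁻¹`, so it is upper triangular with `P 1 1 = 1`.
  have hP1 : P 1 = (1 : Matrix (Fin 2) (Fin 2) F) 1 := by
    ext j
    rw [← mul_nonsing_inv M hM.isUnit, hP, mul_apply, mul_apply, h]
  have hP10 : P 1 0 = 0 := by simpa using congrFun hP1 0
  have hP11 : P 1 1 = 1 := by simpa using congrFun hP1 1
  have hP00 : P 0 0 ≠ 0 := by
    have hdet : κ.det = P.det * M.det := by rw [hκP, det_mul]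
    rw [det_fin_two P, hP10, hP11] at hdet
    intro h0
    exact hκ (by rw [hdet, h0]; ring)
  refine ⟨P 0 1, P 0 0, hP00, ?_⟩
  rw [← mul_assoc, hκP, eta_fin_two P, hP10, hP11]
  congr 1
  simp

lemma orbitRel_of_bottomRowRel {O : Subring F} {g κ : Matrix (Fin 2) (Fin 2) F}
    (hg : g.det ≠ 0) (hκ : κ.det ≠ 0) (h : BottomRowRel O g κ) : OrbitRel O g κ := by
  obtain ⟨c, u, w, hc, hu, hw, huO, huO', hwO, hwO', h10, h11⟩ := h
  set M := !![1, 0; 0, c] * (g * !![u, 0; 0, w])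
  have hM : M.det ≠ 0 := by
    simp only [M, det_mul, det_fin_two_of]
    simp [hc, hu, hw, hg]
  have hrow : κ 1 = M 1 := by
    ext j
    fin_cases j <;> simp [M, vecMul, dotProduct, mul_apply, Fin.sum_univ_two, h10, h11, mul_assoc]
  obtain ⟨x, t, ht, hκ_eq⟩ := exists_eq_upperUnip_mul_diag_mul hM hκ hrow
  refine ⟨!![1, x; 0, 1], !![t, 0; 0, c], !![u, 0; 0, w], by simp [IsUpperUnip],
    by simp [IsDiagTorus, ht, hc], by simp [IsDiagUnits, huO, huO', hwO, hwO'], ?_⟩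
  rw [hκ_eq, ← mul_assoc !![t, 0; 0, 1]]
  congr 2
  simp

open Classical in
/-- `v(c) - v(d)` for the bottom row `(c, d)` of `g`, read with `v 0 = ∞`; the junk value at
`c = d = 0` never occurs for invertible `g`. -/
noncomputable def bottomRowGap (v : F → ℤ) (g : Matrix (Fin 2) (Fin 2) F) : WithTop (WithBot ℤ) :=
  if g 1 0 = 0 then ⊤ else if g 1 1 = 0 then ⊥ else ((v (g 1 0) - v (g 1 1) : ℤ) : WithBot ℤ)

section Gap

variable {v : F → ℤ} {O : Subring F}

lemma bottomRowGap_eq_top_iff {g : Matrix (Fin 2) (Fin 2) F} :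
    bottomRowGap v g = ⊤ ↔ g 1 0 = 0 := by
  unfold bottomRowGap
  split_ifs <;> simp_all

lemma bottomRowGap_eq_bot_iff {g : Matrix (Fin 2) (Fin 2) F} :
    bottomRowGap v g = ⊥ ↔ g 1 0 ≠ 0 ∧ g 1 1 = 0 := by
  unfold bottomRowGap
  split_ifs <;> simp_all

lemma bottomRowGap_of_ne_zero {g : Matrix (Fin 2) (Fin 2) F} (hc : g 1 0 ≠ 0) (hd : g 1 1 ≠ 0) :
    bottomRowGap v g = ((v (g 1 0) - v (g 1 1) : ℤ) : WithBot ℤ) := by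
  simp [bottomRowGap, hc, hd]

lemma BottomRowRel.bottomRowGap_eq
    (hv_mul : ∀ x y : F, x ≠ 0 → y ≠ 0 → v (x * y) = v x + v y)
    (hO : ∀ x : F, x ≠ 0 → (x ∈ O ↔ 0 ≤ v x)) {g κ : Matrix (Fin 2) (Fin 2) F}
    (h : BottomRowRel O g κ) : bottomRowGap v g = bottomRowGap v κ := by
  obtain ⟨c, u, w, hc, hu, hw, huO, huO', hwO, hwO', h10, h11⟩ := h
  have hκ0 : κ 1 0 = 0 ↔ g 1 0 = 0 := by simp [h10, hc, hu]
  have hκ1 : κ 1 1 = 0 ↔ g 1 1 = 0 := by simp [h11, hc, hw]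
  by_cases h0 : g 1 0 = 0
  · rw [bottomRowGap_eq_top_iff.2 h0, bottomRowGap_eq_top_iff.2 (hκ0.2 h0)]
  by_cases h1 : g 1 1 = 0
  · rw [bottomRowGap_eq_bot_iff.2 ⟨h0, h1⟩, bottomRowGap_eq_bot_iff.2 ⟨mt hκ0.1 h0, hκ1.2 h1⟩]
  have hvu : v u = 0 := (val_eq_zero_iff hv_mul hO hu).2 ⟨huO, huO'⟩
  have hvw : v w = 0 := (val_eq_zero_iff hv_mul hO hw).2 ⟨hwO, hwO'⟩
  rw [bottomRowGap_of_ne_zero h0 h1, bottomRowGap_of_ne_zero (mt hκ0.1 h0) (mt hκ1.1 h1), h10,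
    h11, hv_mul _ _ (mul_ne_zero hc h0) hu, hv_mul _ _ hc h0, hv_mul _ _ (mul_ne_zero hc h1) hw,
    hv_mul _ _ hc h1, hvu, hvw]
  congr 2
  ring

lemma bottomRowRel_of_bottomRowGap_eq
    (hv_mul : ∀ x y : F, x ≠ 0 → y ≠ 0 → v (x * y) = v x + v y)
    (hO : ∀ x : F, x ≠ 0 → (x ∈ O ↔ 0 ≤ v x)) {g κ : Matrix (Fin 2) (Fin 2) F}
    (hg : g 1 0 ≠ 0 ∨ g 1 1 ≠ 0) (hκ : κ 1 0 ≠ 0 ∨ κ 1 1 ≠ 0)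
    (h : bottomRowGap v g = bottomRowGap v κ) : BottomRowRel O g κ := by
  have h1O : (1 : F) ∈ O ∧ (1 : F)⁻¹ ∈ O := by simp [O.one_mem]
  by_cases hg10 : g 1 0 = 0
  · have hκ10 : κ 1 0 = 0 := bottomRowGap_eq_top_iff.1 (h ▸ bottomRowGap_eq_top_iff.2 hg10)
    have hg11 : g 1 1 ≠ 0 := hg.resolve_left (not_not.2 hg10)
    have hκ11 : κ 1 1 ≠ 0 := hκ.resolve_left (not_not.2 hκ10)
    exact ⟨κ 1 1 / g 1 1, 1, 1, div_ne_zero hκ11 hg11, one_ne_zero, one_ne_zero, h1O.1, h1O.2,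
      h1O.1, h1O.2, by simp [hg10, hκ10], by field_simp⟩
  by_cases hg11 : g 1 1 = 0
  · obtain ⟨hκ10, hκ11⟩ := bottomRowGap_eq_bot_iff.1 (h ▸ bottomRowGap_eq_bot_iff.2 ⟨hg10, hg11⟩)
    exact ⟨κ 1 0 / g 1 0, 1, 1, div_ne_zero hκ10 hg10, one_ne_zero, one_ne_zero, h1O.1, h1O.2,
      h1O.1, h1O.2, by field_simp, by simp [hg11, hκ11]⟩
  have hκ10 : κ 1 0 ≠ 0 := fun h0 ↦
    hg10 (bottomRowGap_eq_top_iff.1 (h.trans (bottomRowGap_eq_top_iff.2 h0)))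
  have hκ11 : κ 1 1 ≠ 0 := fun h1 ↦
    hg11 (bottomRowGap_eq_bot_iff.1 (h.trans (bottomRowGap_eq_bot_iff.2 ⟨hκ10, h1⟩))).2
  rw [bottomRowGap_of_ne_zero hg10 hg11, bottomRowGap_of_ne_zero hκ10 hκ11] at h
  have hgap : v (g 1 0) - v (g 1 1) = v (κ 1 0) - v (κ 1 1) := by simpa using h
  set u := κ 1 0 * g 1 1 / (g 1 0 * κ 1 1)
  have hu : u ≠ 0 := div_ne_zero (mul_ne_zero hκ10 hg11) (mul_ne_zero hg10 hκ11)
  have hvu : v u = 0 := by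
    rw [val_div hv_mul (mul_ne_zero hκ10 hg11) (mul_ne_zero hg10 hκ11), hv_mul _ _ hκ10 hg11,
      hv_mul _ _ hg10 hκ11]
    omega
  obtain ⟨huO, huO'⟩ := (val_eq_zero_iff hv_mul hO hu).1 hvu
  exact ⟨κ 1 1 / g 1 1, u, 1, div_ne_zero hκ11 hg11, hu, one_ne_zero, huO, huO', h1O.1, h1O.2,
    by simp only [u]; field_simp, by field_simp⟩

end Gap

lemma row_one_ne_zero_of_det_ne_zero {g : Matrix (Fin 2) (Fin 2) F} (hg : g.det ≠ 0) :
    g 1 0 ≠ 0 ∨ g 1 1 ≠ 0 := by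
  contrapose! hg
  simp [det_fin_two, hg.1, hg.2]

lemma orbitRel_iff_bottomRowGap_eq {v : F → ℤ} {O : Subring F}
    (hv_mul : ∀ x y : F, x ≠ 0 → y ≠ 0 → v (x * y) = v x + v y)
    (hO : ∀ x : F, x ≠ 0 → (x ∈ O ↔ 0 ≤ v x)) {g κ : Matrix (Fin 2) (Fin 2) F}
    (hg : g.det ≠ 0) (hκ : κ.det ≠ 0) :
    OrbitRel O g κ ↔ bottomRowGap v g = bottomRowGap v κ :=
  ⟨fun h ↦ (h.bottomRowRel hκ).bottomRowGap_eq hv_mul hO, fun h ↦ orbitRel_of_bottomRowRel hg hκ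
    (bottomRowRel_of_bottomRowGap_eq hv_mul hO (row_one_ne_zero_of_det_ne_zero hg)
      (row_one_ne_zero_of_det_ne_zero hκ) h)⟩

section Reps

variable {v : F → ℤ} {π : F}

lemma det_ne_zero_of_mem_reps {M : Matrix (Fin 2) (Fin 2) F} (h : M ∈ Reps π) : M.det ≠ 0 := by
  rcases h with ⟨γ, rfl⟩ | rfl | ⟨γ, _, rfl⟩ | rfl <;> simp [det_fin_two_of]

lemma bottomRowGap_one : bottomRowGap v (!![1, 0; 0, 1] : Matrix (Fin 2) (Fin 2) F) = ⊤ :=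
  bottomRowGap_eq_top_iff.2 rfl

lemma bottomRowGap_swap : bottomRowGap v (!![0, 1; 1, 0] : Matrix (Fin 2) (Fin 2) F) = ⊥ :=
  bottomRowGap_eq_bot_iff.2 ⟨one_ne_zero, rfl⟩

lemma bottomRowGap_lower_unipotent
    (hv_mul : ∀ x y : F, x ≠ 0 → y ≠ 0 → v (x * y) = v x + v y) (hπ0 : π ≠ 0) (hπ : v π = 1)
    (γ : ℕ) : bottomRowGap v !![1, 0; π ^ γ, 1] = ((γ : ℤ) : WithBot ℤ) := by
  rw [bottomRowGap_of_ne_zero (by simpa using pow_ne_zero γ hπ0) (by simp)]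
  simp [val_pow hv_mul hπ0, hπ, val_one_eq_zero hv_mul]

lemma bottomRowGap_antidiag
    (hv_mul : ∀ x y : F, x ≠ 0 → y ≠ 0 → v (x * y) = v x + v y) (hπ0 : π ≠ 0) (hπ : v π = 1)
    (γ : ℕ) : bottomRowGap v !![0, 1; 1, π ^ γ] = ((-γ : ℤ) : WithBot ℤ) := by
  rw [bottomRowGap_of_ne_zero (by simp) (by simpa using pow_ne_zero γ hπ0)]
  simp [val_pow hv_mul hπ0, hπ, val_one_eq_zero hv_mul]

lemma bottomRowGap_injOn_reps
    (hv_mul : ∀ x y : F, x ≠ 0 → y ≠ 0 → v (x * y) = v x + v y) (hπ0 : π ≠ 0) (hπ : v π = 1) :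
    Set.InjOn (bottomRowGap v) (Reps π) := by
  rintro κ (⟨a, rfl⟩ | rfl | ⟨a, ha, rfl⟩ | rfl) κ' (⟨b, rfl⟩ | rfl | ⟨b, hb, rfl⟩ | rfl) h <;>
  simp only [bottomRowGap_lower_unipotent hv_mul hπ0 hπ, bottomRowGap_antidiag hv_mul hπ0 hπ,
    bottomRowGap_one, bottomRowGap_swap] at h <;>
  first
  | rfl
  | (simp at h; done)
  | (simp only [WithTop.coe_eq_coe, WithBot.coe_eq_coe] at h
     obtain rfl : a = b := by omega
     rfl)
  | (simp only [WithTop.coe_eq_coe, WithBot.coe_eq_coe] at h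
     omega)

lemma exists_mem_reps_bottomRowGap_eq
    (hv_mul : ∀ x y : F, x ≠ 0 → y ≠ 0 → v (x * y) = v x + v y) (hπ0 : π ≠ 0) (hπ : v π = 1)
    (z : WithTop (WithBot ℤ)) : ∃ κ ∈ Reps π, bottomRowGap v κ = z := by
  induction z using WithTop.recTopCoe with
  | top => exact ⟨_, Or.inr (Or.inl rfl), bottomRowGap_one⟩
  | coe z =>
    induction z using WithBot.recBotCoe with
    | bot => exact ⟨_, Or.inr (Or.inr (Or.inr rfl)), bottomRowGap_swap⟩
    | coe n =>
      obtain ⟨γ, rfl | rfl⟩ := Int.eq_nat_or_neg n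
      · exact ⟨_, Or.inl ⟨γ, rfl⟩, bottomRowGap_lower_unipotent hv_mul hπ0 hπ γ⟩
      · rcases γ with _ | γ
        · exact ⟨_, Or.inl ⟨0, rfl⟩, bottomRowGap_lower_unipotent hv_mul hπ0 hπ 0⟩
        · exact ⟨_, Or.inr (Or.inr (Or.inl ⟨γ + 1, by omega, rfl⟩)),
            bottomRowGap_antidiag hv_mul hπ0 hπ (γ + 1)⟩

end Reps

theorem stmt_8_general (O : Subring F) (v : F → ℤ) (π : F)
    (hπ0 : π ≠ 0) (hπ : v π = 1)
    (hv_mul : ∀ x y : F, x ≠ 0 → y ≠ 0 → v (x * y) = v x + v y)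
    (hO : ∀ x : F, x ≠ 0 → (x ∈ O ↔ 0 ≤ v x)) :
    (∀ g : Matrix (Fin 2) (Fin 2) F, IsUnit g.det → ∃ κ ∈ Reps π, OrbitRel O g κ) ∧
    (∀ κ ∈ Reps π, ∀ κ' ∈ Reps π, OrbitRel O κ κ' → κ = κ') := by
  refine ⟨fun g hg ↦ ?_, fun κ hκ κ' hκ' h ↦ ?_⟩
  · obtain ⟨κ, hκ, hgap⟩ := exists_mem_reps_bottomRowGap_eq hv_mul hπ0 hπ (bottomRowGap v g)
    exact ⟨κ, hκ, (orbitRel_iff_bottomRowGap_eq hv_mul hO hg.ne_zero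
      (det_ne_zero_of_mem_reps hκ)).2 hgap.symm⟩
  · have hgap := (orbitRel_iff_bottomRowGap_eq hv_mul hO (det_ne_zero_of_mem_reps hκ)
      (det_ne_zero_of_mem_reps hκ')).1 h
    exact bottomRowGap_injOn_reps hv_mul hπ0 hπ hκ hκ' hgap

/-- Proposition "representatives": the listed matrices form a complete set of representatives
for the two-sided action of `A × K_A` on `N\GL₂(F)`, and they represent pairwise distinct
orbits. -/
theorem stmt_8 (O : Subring F) (v : F → ℤ) (π : F)
    (hπ0 : π ≠ 0) (hπ : v π = 1)
    (hv_mul : ∀ x y : F, x ≠ 0 → y ≠ 0 → v (x * y) = v x + v y)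
    (hO : ∀ x : F, x ≠ 0 → (x ∈ O ↔ 0 ≤ v x)) (h0O : (0 : F) ∈ O) :
    (∀ g : Matrix (Fin 2) (Fin 2) F, IsUnit g.det → ∃ κ ∈ Reps π, OrbitRel O g κ) ∧
    (∀ κ ∈ Reps π, ∀ κ' ∈ Reps π, OrbitRel O κ κ' → κ = κ') :=
  stmt_8_general O v π hπ0 hπ hv_mul hO
end

section
/- Let p be a prime and v the p-adic valuation on ℤ. Fix positive integers m₁, v₀ and let N(m₁, m₂) := #{m₃ ∈ [m₁/2, 2m₁] ∩ ℤ : v(m₃ − m₁) + v(m₃ − m₂) ≥ v₀} for m₂ ∈ [m₁/2, 2m₁] ∩ ℤ (with v(0) := +∞). Then: (a) if m₁ ≠ m₂, N(m₁, m₂) ≤ C·(v₀+1)·m₁·p^{−v₀ + v(m₁−m₂)} + C·(v₀+1) for an absolute constant C; (b) if m₁ = m₂, N(m₁, m₂) ≤ C·(v₀+1)·m₁·p^{−⌈v₀/2⌉} + C·(v₀+1). -/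
private lemma ediv_cast_le {x q : ℤ} (hq : 0 < q) : ((x / q : ℤ) : ℝ) ≤ (x : ℝ) / (q : ℝ) := by
  rw [le_div_iff₀ (by exact_mod_cast hq)]
  exact_mod_cast Int.ediv_mul_le x hq.ne'

private lemma lt_ediv_cast {x q : ℤ} (hq : 0 < q) :
    (x : ℝ) / (q : ℝ) - 1 < ((x / q : ℤ) : ℝ) := by
  have h := Int.lt_ediv_add_one_mul_self x hq
  have hq' : (0 : ℝ) < (q : ℝ) := by exact_mod_cast hq
  rw [sub_lt_iff_lt_add, div_lt_iff₀ hq']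
  have : (x : ℝ) < ((x / q : ℤ) + 1) * q := by exact_mod_cast h
  nlinarith [this]

private lemma class_card (n a q : ℤ) (hq : 0 < q) (hn : 0 ≤ n) :
    (((Finset.Icc 1 n).filter (fun m => q ∣ m - a)).card : ℝ) ≤ (n : ℝ) / (q : ℝ) + 2 := by
  classical
  have hmem : ∀ m ∈ (Finset.Icc 1 n).filter (fun m => q ∣ m - a),
      (m - a) / q ∈ Finset.Icc ((1 - a) / q) ((n - a) / q) := by
    intro m hm
    simp only [Finset.mem_filter, Finset.mem_Icc] at hm ⊢
    exact ⟨Int.ediv_le_ediv hq (by omega), Int.ediv_le_ediv hq (by omega)⟩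
  have hinj : Set.InjOn (fun m => (m - a) / q) ↑((Finset.Icc 1 n).filter (fun m => q ∣ m - a)) := by
    intro x hx y hy hxy
    simp only [Finset.coe_filter, Set.mem_setOf_eq] at hx hy
    have hx2 := Int.ediv_mul_cancel hx.2
    have hy2 := Int.ediv_mul_cancel hy.2
    simp only at hxy
    nlinarith [hx2, hy2, hxy]
  have hcard := Finset.card_le_card_of_injOn _ hmem hinj
  rw [Int.card_Icc] at hcard
  have hq' : (0 : ℝ) < (q : ℝ) := by exact_mod_cast hq
  have hn' : (0 : ℝ) ≤ (n : ℝ) := by exact_mod_cast hn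
  have hb : (0 : ℝ) ≤ (n : ℝ) / q + 2 := by positivity
  have hu := ediv_cast_le (x := n - a) hq
  have hl := lt_ediv_cast (x := 1 - a) hq
  have hdiv : ((n : ℝ) - 1) / q ≤ (n : ℝ) / q := by gcongr; linarith
  have h1 : ((((n - a) / q + 1 - (1 - a) / q).toNat : ℤ) : ℝ) ≤ (n : ℝ) / q + 2 := by
    rw [Int.toNat_eq_max]
    push_cast [max_le_iff]
    constructor
    · push_cast at hu hl
      have e1 : ((n : ℝ) - (a : ℝ)) / q - ((1 : ℝ) - (a : ℝ)) / q = ((n : ℝ) - 1) / q := by ring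
      linarith
    · exact hb
  calc (((Finset.Icc 1 n).filter (fun m => q ∣ m - a)).card : ℝ)
      ≤ ((((n - a) / q + 1 - (1 - a) / q).toNat : ℕ) : ℝ) := by exact_mod_cast hcard
    _ ≤ (n : ℝ) / q + 2 := by exact_mod_cast h1

/-- The counting estimate for near-diagonal tuples: with `v = v_p` the p-adic valuation
(`v(0) = ∞` encoded by treating `m₃ = m₁` and `m₃ = m₂` as always admissible), and
`N(m₁, m₂) = #{m₃ ∈ [m₁/2, 2m₁] : v(m₃ - m₁) + v(m₃ - m₂) ≥ v₀}`, there is an absolute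
constant `C` such that for all primes `p`, positive integers `m₁, v₀` and `m₂ ∈ [m₁/2, 2m₁]`:
(a) if `m₂ ≠ m₁`, then `N(m₁,m₂) ≤ C (v₀+1) m₁ p^{-v₀ + v(m₁ - m₂)} + C (v₀+1)`;
(b) if `m₂ = m₁`, then `N(m₁,m₂) ≤ C (v₀+1) m₁ p^{-⌈v₀/2⌉} + C (v₀+1)`. -/
theorem stmt_13 :
    ∃ C : ℝ, 0 < C ∧
      ∀ (p : ℕ), p.Prime →
      ∀ (m₁ v₀ : ℕ), 0 < m₁ → 0 < v₀ →
      ∀ (m₂ : ℕ), m₁ ≤ 2 * m₂ → m₂ ≤ 2 * m₁ →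
        ((({m₃ : ℤ | (m₁ : ℤ) ≤ 2 * m₃ ∧ m₃ ≤ 2 * (m₁ : ℤ) ∧
            (m₃ = (m₁ : ℤ) ∨ m₃ = (m₂ : ℤ) ∨
              v₀ ≤ padicValInt p (m₃ - (m₁ : ℤ)) + padicValInt p (m₃ - (m₂ : ℤ)))}).ncard : ℝ)
          ≤ if m₁ = m₂ then
              C * (v₀ + 1) * m₁ * (p : ℝ) ^ (-(((v₀ + 1) / 2 : ℕ) : ℤ)) + C * (v₀ + 1)
            else
              C * (v₀ + 1) * m₁ *
                  (p : ℝ) ^ (-(v₀ : ℤ) + (padicValInt p ((m₁ : ℤ) - (m₂ : ℤ)) : ℤ)) +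
                C * (v₀ + 1)) := by
  classical
  refine ⟨4, by norm_num, ?_⟩
  intro p hp m₁ v₀ hm₁ hv₀ m₂ h12 h21
  haveI : Fact p.Prime := ⟨hp⟩
  have hp1 : (1 : ℝ) ≤ (p : ℝ) := by exact_mod_cast hp.one_lt.le
  have hpZ : (0 : ℤ) < (p : ℤ) := by exact_mod_cast hp.pos
  set P : ℝ := if m₁ = m₂ then (p : ℝ) ^ (-(((v₀ + 1) / 2 : ℕ) : ℤ))
    else (p : ℝ) ^ (-(v₀ : ℤ) + (padicValInt p ((m₁ : ℤ) - (m₂ : ℤ)) : ℤ)) with hPdef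
  have hPpos : 0 ≤ P := by
    rw [hPdef]; split_ifs <;> exact zpow_nonneg (by linarith) _
  set G : ℕ → Finset ℤ := fun c => (Finset.Icc 1 (2 * (m₁ : ℤ))).filter
    (fun m => (p : ℤ) ^ c ∣ m - (m₁ : ℤ) ∧ (p : ℤ) ^ (v₀ - c) ∣ m - (m₂ : ℤ)) with hGdef
  set F : Finset ℤ := {(m₁ : ℤ), (m₂ : ℤ)} ∪ (Finset.range (v₀ + 1)).biUnion G with hFdef
  have hm₁Z : (1 : ℤ) ≤ (m₁ : ℤ) := by exact_mod_cast hm₁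
  -- the set is contained in F
  have hsub : {m₃ : ℤ | (m₁ : ℤ) ≤ 2 * m₃ ∧ m₃ ≤ 2 * (m₁ : ℤ) ∧
      (m₃ = (m₁ : ℤ) ∨ m₃ = (m₂ : ℤ) ∨
        v₀ ≤ padicValInt p (m₃ - (m₁ : ℤ)) + padicValInt p (m₃ - (m₂ : ℤ)))} ⊆ ↑F := by
    rintro m ⟨hA, hB, hC⟩
    rw [hFdef, Finset.coe_union, Set.mem_union]
    rcases hC with h | h | h
    · exact Or.inl (by simp [h])
    · exact Or.inl (by simp [h])
    · refine Or.inr ?_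
      rw [Finset.mem_coe, Finset.mem_biUnion]
      refine ⟨min (padicValInt p (m - (m₁ : ℤ))) v₀, Finset.mem_range.mpr (by omega), ?_⟩
      rw [hGdef]
      simp only [Finset.mem_filter, Finset.mem_Icc]
      refine ⟨⟨by omega, by omega⟩, ?_, ?_⟩
      · exact (padicValInt_dvd_iff _ _).mpr (Or.inr (min_le_left _ _))
      · exact (padicValInt_dvd_iff _ _).mpr (Or.inr (by omega))
  -- each class has small cardinality
  have key : ∀ c ∈ Finset.range (v₀ + 1), ((G c).card : ℝ) ≤ 2 * (m₁ : ℝ) * P + 2 := by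
    intro c hc
    rw [Finset.mem_range] at hc
    have hcv : c ≤ v₀ := by omega
    set e : ℕ := max c (v₀ - c) with hedef
    have hee : (max c (v₀ - c) : ℕ) = e := rfl
    -- either G c is empty, or we can bound it by a single congruence class mod p^e
    by_cases hempty : (m₁ ≠ m₂) ∧ padicValInt p ((m₁ : ℤ) - (m₂ : ℤ)) < min c (v₀ - c)
    · -- empty case
      have : G c = ∅ := by
        rw [Finset.eq_empty_iff_forall_notMem]
        intro m hm
        rw [hGdef] at hm
        simp only [Finset.mem_filter, Finset.mem_Icc] at hm
        obtain ⟨-, hd1, hd2⟩ := hm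
        have d1 : (p : ℤ) ^ (min c (v₀ - c)) ∣ m - (m₁ : ℤ) :=
          dvd_trans (pow_dvd_pow _ (min_le_left _ _)) hd1
        have d2 : (p : ℤ) ^ (min c (v₀ - c)) ∣ m - (m₂ : ℤ) :=
          dvd_trans (pow_dvd_pow _ (min_le_right _ _)) hd2
        have d : (p : ℤ) ^ (min c (v₀ - c)) ∣ (m₁ : ℤ) - (m₂ : ℤ) := by
          have := dvd_sub d2 d1
          have heq : (m - (m₂ : ℤ)) - (m - (m₁ : ℤ)) = (m₁ : ℤ) - (m₂ : ℤ) := by ring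
          rwa [heq] at this
        rcases (padicValInt_dvd_iff _ _).mp d with h0 | hle
        · have : (m₁ : ℤ) = (m₂ : ℤ) := by omega
          exact hempty.1 (by exact_mod_cast this)
        · omega
      rw [this]
      simp only [Finset.card_empty, Nat.cast_zero]
      positivity
    · -- bound by a congruence class
      have hq : (0 : ℤ) < (p : ℤ) ^ e := by positivity
      have hGsub : ∀ a : ℤ, (∀ m ∈ G c, (p : ℤ) ^ e ∣ m - a) →
          ((G c).card : ℝ) ≤ (2 * (m₁ : ℝ)) / (((p : ℤ) ^ e : ℤ) : ℝ) + 2 := by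
        intro a ha
        have hss : G c ⊆ (Finset.Icc 1 (2 * (m₁ : ℤ))).filter (fun m => (p : ℤ) ^ e ∣ m - a) := by
          intro m hm
          have hm' := hm
          rw [hGdef] at hm'
          simp only [Finset.mem_filter, Finset.mem_Icc] at hm' ⊢
          exact ⟨hm'.1, ha m hm⟩
        have := class_card (2 * (m₁ : ℤ)) a ((p : ℤ) ^ e) hq (by omega)
        have hcc : ((G c).card : ℝ) ≤
            (((Finset.Icc 1 (2 * (m₁ : ℤ))).filter (fun m => (p : ℤ) ^ e ∣ m - a)).card : ℝ) := by
          exact_mod_cast Finset.card_le_card hss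
        calc ((G c).card : ℝ) ≤ _ := hcc
          _ ≤ ((2 * (m₁ : ℤ) : ℤ) : ℝ) / (((p : ℤ) ^ e : ℤ) : ℝ) + 2 := this
          _ = (2 * (m₁ : ℝ)) / (((p : ℤ) ^ e : ℤ) : ℝ) + 2 := by push_cast; ring
      have hbound : ((G c).card : ℝ) ≤ (2 * (m₁ : ℝ)) / (((p : ℤ) ^ e : ℤ) : ℝ) + 2 := by
        rcases le_total (v₀ - c) c with h | h
        · -- e = c, use the m₁ congruence
          refine hGsub (m₁ : ℤ) ?_
          intro m hm
          rw [hGdef] at hm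
          simp only [Finset.mem_filter] at hm
          exact dvd_trans (pow_dvd_pow _ (by omega)) hm.2.1
        · -- e = v₀ - c, use the m₂ congruence
          refine hGsub (m₂ : ℤ) ?_
          intro m hm
          rw [hGdef] at hm
          simp only [Finset.mem_filter] at hm
          exact dvd_trans (pow_dvd_pow _ (by omega)) hm.2.2
      have hdiv : (2 * (m₁ : ℝ)) / (((p : ℤ) ^ e : ℤ) : ℝ) = 2 * (m₁ : ℝ) * (p : ℝ) ^ (-(e : ℤ)) := by
        rw [zpow_neg, zpow_natCast]
        push_cast
        ring
      have hPe : (p : ℝ) ^ (-(e : ℤ)) ≤ P := by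
        rw [hPdef]
        by_cases hmm : m₁ = m₂
        · rw [if_pos hmm]
          refine zpow_le_zpow_right₀ hp1 ?_
          have : ((v₀ + 1) / 2 : ℕ) ≤ e := by omega
          omega
        · rw [if_neg hmm]
          push_neg at hempty
          have hw := hempty hmm
          refine zpow_le_zpow_right₀ hp1 ?_
          omega
      calc ((G c).card : ℝ) ≤ 2 * (m₁ : ℝ) * (p : ℝ) ^ (-(e : ℤ)) + 2 := by
            rw [← hdiv]; exact hbound
        _ ≤ 2 * (m₁ : ℝ) * P + 2 := by
            have : (0 : ℝ) ≤ 2 * (m₁ : ℝ) := by positivity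
            nlinarith [hPe]
  -- put everything together
  have hcardF : ((F.card : ℕ) : ℝ) ≤ 2 + (v₀ + 1 : ℝ) * (2 * (m₁ : ℝ) * P + 2) := by
    have h2 : F.card ≤ 2 + ∑ c ∈ Finset.range (v₀ + 1), (G c).card := by
      rw [hFdef]
      refine (Finset.card_union_le _ _).trans ?_
      have hpair : ({(m₁ : ℤ), (m₂ : ℤ)} : Finset ℤ).card ≤ 2 :=
        (Finset.card_insert_le _ _).trans (by simp)
      have := Finset.card_biUnion_le (s := Finset.range (v₀ + 1)) (t := G)
      omega
    have hsum : ((∑ c ∈ Finset.range (v₀ + 1), (G c).card : ℕ) : ℝ) ≤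
        (v₀ + 1 : ℝ) * (2 * (m₁ : ℝ) * P + 2) := by
      push_cast
      calc (∑ c ∈ Finset.range (v₀ + 1), ((G c).card : ℝ))
          ≤ ∑ _c ∈ Finset.range (v₀ + 1), (2 * (m₁ : ℝ) * P + 2) := Finset.sum_le_sum key
        _ = (v₀ + 1 : ℝ) * (2 * (m₁ : ℝ) * P + 2) := by
            rw [Finset.sum_const, Finset.card_range]; ring
    have h2' : ((F.card : ℕ) : ℝ) ≤ 2 + ((∑ c ∈ Finset.range (v₀ + 1), (G c).card : ℕ) : ℝ) := by
      exact_mod_cast h2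
    linarith
  have hncard : (({m₃ : ℤ | (m₁ : ℤ) ≤ 2 * m₃ ∧ m₃ ≤ 2 * (m₁ : ℤ) ∧
      (m₃ = (m₁ : ℤ) ∨ m₃ = (m₂ : ℤ) ∨
        v₀ ≤ padicValInt p (m₃ - (m₁ : ℤ)) + padicValInt p (m₃ - (m₂ : ℤ)))}).ncard : ℝ)
      ≤ ((F.card : ℕ) : ℝ) := by
    have := Set.ncard_le_ncard hsub (Finset.finite_toSet F)
    rw [Set.ncard_coe_finset] at this
    exact_mod_cast this
  have hfinal : (({m₃ : ℤ | (m₁ : ℤ) ≤ 2 * m₃ ∧ m₃ ≤ 2 * (m₁ : ℤ) ∧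
      (m₃ = (m₁ : ℤ) ∨ m₃ = (m₂ : ℤ) ∨
        v₀ ≤ padicValInt p (m₃ - (m₁ : ℤ)) + padicValInt p (m₃ - (m₂ : ℤ)))}).ncard : ℝ)
      ≤ 4 * ((v₀ : ℝ) + 1) * (m₁ : ℝ) * P + 4 * ((v₀ : ℝ) + 1) := by
    have hm₁R : (1 : ℝ) ≤ (m₁ : ℝ) := by exact_mod_cast hm₁
    have hv₀R : (1 : ℝ) ≤ (v₀ : ℝ) := by exact_mod_cast hv₀
    have := hncard.trans hcardF
    nlinarith [this, hPpos, mul_nonneg (mul_nonneg (by linarith : (0:ℝ) ≤ (v₀:ℝ) + 1)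
      (by linarith : (0:ℝ) ≤ (m₁:ℝ))) hPpos]
  by_cases hmm : m₁ = m₂
  · rw [if_pos hmm]
    have : P = (p : ℝ) ^ (-(((v₀ + 1) / 2 : ℕ) : ℤ)) := by rw [hPdef, if_pos hmm]
    rw [this] at hfinal
    linarith [hfinal]
  · rw [if_neg hmm]
    have : P = (p : ℝ) ^ (-(v₀ : ℤ) + (padicValInt p ((m₁ : ℤ) - (m₂ : ℤ)) : ℤ)) := by
      rw [hPdef, if_neg hmm]
    rw [this] at hfinal
    linarith [hfinal]
end
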